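/- arXiv:2306.07526 — 2 statements merged into one kernel-verified Lean document; each statement's English description precedes it below -/
import Mathlib

section
/- Let μ be a compactly supported probability measure on ℝ^d and σ > 0, with p_σ(x) = ∫ φ_σ(x − z) dμ(z) and posterior mean m_σ(x) = (∫ z · φ_σ(x − z) dμ(z)) / p_σ(x). Then for every x ∈ ℝ^d, the posterior covariance matrix satisfies Tweedie's covariance formula: (∫ (z − m_σ(x))(z − m_σ(x))ᵀ φ_σ(x − z) dμ(z)) / p_σ(x) = σ² I + σ⁴ ∇² log p_σ(x), where ∇² denotes the Hessian. -/
set_option synthInstance.maxHeartbeats 1000000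
set_option maxHeartbeats 1000000

open MeasureTheory Filter Real Metric
open scoped RealInnerProductSpace

/-- The isotropic Gaussian density `φ_σ(w) = (2πσ²)^{-d/2} exp(-‖w‖²/(2σ²))` on `ℝ^d`. -/
noncomputable def gaussDensity (d : ℕ) (σ : ℝ) (w : EuclideanSpace ℝ (Fin d)) : ℝ :=
  (2 * π * σ ^ 2) ^ (-(d : ℝ) / 2) * Real.exp (-‖w‖ ^ 2 / (2 * σ ^ 2))

section aux

variable {d : ℕ}

lemma hasFDerivAt_normSq (w : EuclideanSpace ℝ (Fin d)) :
    HasFDerivAt (fun w : EuclideanSpace ℝ (Fin d) => ‖w‖ ^ 2) ((2:ℝ) • innerSL ℝ w) w := by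
  have h := (hasStrictFDerivAt_norm_sq w).hasFDerivAt
  refine h.congr_fderiv ?_
  ext v
  simp [real_inner_comm, two_smul, mul_comm]

lemma contDiff_gauss (σ : ℝ) : ContDiff ℝ ⊤ (gaussDensity d σ) := by
  unfold gaussDensity
  exact contDiff_const.mul (((contDiff_norm_sq ℝ).neg.div_const _).exp)

lemma gauss_pos {σ : ℝ} (hσ : 0 < σ) (w : EuclideanSpace ℝ (Fin d)) :
    0 < gaussDensity d σ w :=
  mul_pos (rpow_pos_of_pos (by positivity) _) (exp_pos _)

lemma hasFDerivAt_gauss {σ : ℝ} (hσ : 0 < σ) (w : EuclideanSpace ℝ (Fin d)) :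
    HasFDerivAt (gaussDensity d σ)
      ((-σ⁻¹ ^ 2 * gaussDensity d σ w) • innerSL ℝ w) w := by
  have hσ2 : (σ:ℝ) ^ 2 ≠ 0 := by positivity
  have h1 : HasFDerivAt (fun w : EuclideanSpace ℝ (Fin d) => -‖w‖ ^ 2 / (2 * σ ^ 2))
      (((2 * σ ^ 2)⁻¹ * -2) • innerSL ℝ w) w := by
    have h := ((hasFDerivAt_normSq w).neg).const_mul ((2 * σ ^ 2)⁻¹)
    have he : (fun w : EuclideanSpace ℝ (Fin d) => -‖w‖ ^ 2 / (2 * σ ^ 2))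
        = fun w : EuclideanSpace ℝ (Fin d) => (2 * σ ^ 2)⁻¹ * -‖w‖ ^ 2 :=
      funext fun x => div_eq_inv_mul _ _
    rw [he]
    refine h.congr_fderiv ?_
    ext v
    simp [smul_smul]
  have h2 := (h1.exp).const_mul ((2 * π * σ ^ 2) ^ (-(d : ℝ) / 2))
  have he2 : (fun w : EuclideanSpace ℝ (Fin d) =>
      (2 * π * σ ^ 2) ^ (-(d : ℝ) / 2) * Real.exp (-‖w‖ ^ 2 / (2 * σ ^ 2))) = gaussDensity d σ := rfl
  rw [he2] at h2
  refine h2.congr_fderiv ?_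
  ext v
  simp only [ContinuousLinearMap.coe_smul', Pi.smul_apply, smul_eq_mul, gaussDensity]
  field_simp

noncomputable def innerSL2 (d : ℕ) :
    EuclideanSpace ℝ (Fin d) →L[ℝ] EuclideanSpace ℝ (Fin d) →L[ℝ] ℝ := innerSL ℝ

@[simp] lemma innerSL2_apply (v w : EuclideanSpace ℝ (Fin d)) : innerSL2 d v w = ⟪v, w⟫ := rfl

lemma hasFDerivAt_fderiv_gauss {σ : ℝ} (hσ : 0 < σ) (w : EuclideanSpace ℝ (Fin d)) :
    HasFDerivAt (fderiv ℝ (gaussDensity d σ))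
      ((-σ⁻¹ ^ 2 * gaussDensity d σ w) • innerSL2 d
        + ((-σ⁻¹ ^ 2 : ℝ) • ((-σ⁻¹ ^ 2 * gaussDensity d σ w) • innerSL2 d w)).smulRight
            (innerSL2 d w)) w := by
  have he : fderiv ℝ (gaussDensity d σ)
      = fun w => (-σ⁻¹ ^ 2 * gaussDensity d σ w) • innerSL2 d w :=
    funext fun w => (hasFDerivAt_gauss hσ w).fderiv
  rw [he]
  exact ((hasFDerivAt_gauss hσ w).const_mul _).smul (innerSL2 d).hasFDerivAt

variable {E : Type*} [NormedAddCommGroup E] [NormedSpace ℝ E] [CompleteSpace E]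

omit [NormedSpace ℝ E] [CompleteSpace E] in
lemma integrable_aux (μ : Measure (EuclideanSpace ℝ (Fin d))) [IsFiniteMeasure μ]
    {K : Set (EuclideanSpace ℝ (Fin d))} (hK : IsCompact K) (hμK : μ Kᶜ = 0)
    {h : EuclideanSpace ℝ (Fin d) → E} (hh : Continuous h) : Integrable h μ := by
  obtain ⟨C, hC⟩ := hK.exists_bound_of_continuousOn hh.continuousOn
  have hae : ∀ᵐ z ∂μ, z ∈ K := by
    rw [ae_iff]
    exact hμK
  exact (integrable_const C).mono' hh.aestronglyMeasurable
    (hae.mono fun z hz => hC z hz)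

lemma key_deriv (μ : Measure (EuclideanSpace ℝ (Fin d))) [IsFiniteMeasure μ]
    {K : Set (EuclideanSpace ℝ (Fin d))} (hK : IsCompact K) (hμK : μ Kᶜ = 0)
    {g : EuclideanSpace ℝ (Fin d) → E} (hg : ContDiff ℝ 1 g) (x : EuclideanSpace ℝ (Fin d)) :
    HasFDerivAt (fun y => ∫ z, g (y - z) ∂μ) (∫ z, fderiv ℝ g (x - z) ∂μ) x := by
  have hgc : Continuous g := hg.continuous
  have hg' : Continuous (fderiv ℝ g) := hg.continuous_fderiv one_ne_zero
  have hae : ∀ᵐ z ∂μ, z ∈ K := by rw [ae_iff]; exact hμK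
  set S : Set (EuclideanSpace ℝ (Fin d)) := (fun p : _ × _ => p.1 - p.2) '' (closedBall x 1 ×ˢ K)
  have hS : IsCompact S :=
    ((isCompact_closedBall x 1).prod hK).image (continuous_fst.sub continuous_snd)
  obtain ⟨C, hC⟩ := hS.exists_bound_of_continuousOn hg'.continuousOn
  refine hasFDerivAt_integral_of_dominated_of_fderiv_le (F' := fun y z => fderiv ℝ g (y - z))
      (bound := fun _ => C) (s := ball x 1) (ball_mem_nhds x one_pos) ?_ ?_ ?_ ?_ ?_ ?_
  · exact Eventually.of_forall fun y =>
      (hgc.comp (continuous_const.sub continuous_id)).aestronglyMeasurable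
  · exact integrable_aux μ hK hμK (hgc.comp (continuous_const.sub continuous_id))
  · exact (hg'.comp (continuous_const.sub continuous_id)).aestronglyMeasurable
  · exact hae.mono fun z hz y hy => hC _ ⟨(y, z), ⟨ball_subset_closedBall hy, hz⟩, rfl⟩
  · exact integrable_const C
  · refine hae.mono fun z _ y _ => ?_
    have h1 : HasFDerivAt (fun y : EuclideanSpace ℝ (Fin d) => y - z)
        (ContinuousLinearMap.id ℝ _) y := (hasFDerivAt_id y).sub_const z
    have h2 := (hg.differentiable one_ne_zero (y - z)).hasFDerivAt.comp y h1
    simpa [Function.comp_def] using h2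

end aux

/-- **Tweedie's covariance formula.** For a compactly supported probability measure `μ` on
`ℝ^d`, `σ > 0`, `p_σ(x) = ∫ φ_σ(x - z) dμ(z)` and posterior mean
`m_σ(x) = (∫ z φ_σ(x - z) dμ(z)) / p_σ(x)`, the posterior covariance matrix satisfies
`(∫ (z - m)(z - m)ᵀ φ_σ(x - z) dμ(z)) / p_σ(x) = σ² I + σ⁴ ∇² log p_σ(x)`,
where the Hessian `∇² log p_σ(x)` has entries given by the second iterated derivative
evaluated at pairs of coordinate basis vectors. -/
theorem tweedie_covariance {d : ℕ} (μ : Measure (EuclideanSpace ℝ (Fin d)))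
    [IsProbabilityMeasure μ] (K : Set (EuclideanSpace ℝ (Fin d)))
    (hK : IsCompact K) (hμK : μ Kᶜ = 0)
    (σ : ℝ) (hσ : 0 < σ)
    (p : EuclideanSpace ℝ (Fin d) → ℝ)
    (hp : ∀ x, p x = ∫ z, gaussDensity d σ (x - z) ∂μ)
    (m : EuclideanSpace ℝ (Fin d) → EuclideanSpace ℝ (Fin d))
    (hm : ∀ x, m x = (p x)⁻¹ • (∫ z, gaussDensity d σ (x - z) • z ∂μ)) :
    ∀ x, (Matrix.of fun i j =>
        (p x)⁻¹ * ∫ z, gaussDensity d σ (x - z) * ((z i - m x i) * (z j - m x j)) ∂μ)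
      = σ ^ 2 • (1 : Matrix (Fin d) (Fin d) ℝ) +
        σ ^ 4 • (Matrix.of fun i j =>
          iteratedFDeriv ℝ 2 (fun y => Real.log (p y)) x
            ![EuclideanSpace.single i 1, EuclideanSpace.single j 1]) := by
  intro x
  have hσ2 : (σ:ℝ) ≠ 0 := hσ.ne'
  have hgc : Continuous (gaussDensity d σ) := (contDiff_gauss σ).continuous
  have hgc1 : ContDiff ℝ 1 (gaussDensity d σ) := (contDiff_gauss σ).of_le le_top
  have hgFd : ContDiff ℝ 1 (fderiv ℝ (gaussDensity d σ)) :=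
    (contDiff_gauss σ).fderiv_right le_top
  -- first derivative of p
  set F1 : EuclideanSpace ℝ (Fin d) → (EuclideanSpace ℝ (Fin d) →L[ℝ] ℝ) :=
    fun y => ∫ z, fderiv ℝ (gaussDensity d σ) (y - z) ∂μ with hF1def
  have hp' : ∀ y, HasFDerivAt p (F1 y) y := by
    intro y
    have hpe : p = fun y => ∫ z, gaussDensity d σ (y - z) ∂μ := funext hp
    rw [hpe]
    exact key_deriv μ hK hμK hgc1 y
  have hF1 : HasFDerivAt F1 (∫ z, fderiv ℝ (fderiv ℝ (gaussDensity d σ)) (x - z) ∂μ) x :=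
    key_deriv μ hK hμK hgFd x
  -- positivity of p
  have hae : ∀ᵐ z ∂μ, z ∈ K := by rw [ae_iff]; exact hμK
  have hppos : ∀ y, 0 < p y := by
    intro y
    rw [hp y]
    have hKne : K.Nonempty := by
      by_contra h
      rw [Set.not_nonempty_iff_eq_empty] at h
      rw [h, Set.compl_empty] at hμK
      simp [measure_univ] at hμK
    obtain ⟨z₀, hz₀⟩ := hKne
    have hSc : IsCompact ((fun z => y - z) '' K) := hK.image (continuous_const.sub continuous_id)
    obtain ⟨w₀, hw₀S, hw₀min⟩ := hSc.exists_isMinOn ⟨y - z₀, ⟨z₀, hz₀, rfl⟩⟩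
      hgc.continuousOn
    have hmono : ∫ _z, gaussDensity d σ w₀ ∂μ ≤ ∫ z, gaussDensity d σ (y - z) ∂μ := by
      refine integral_mono_ae (integrable_const _)
        (integrable_aux μ hK hμK (hgc.comp (continuous_const.sub continuous_id))) ?_
      exact hae.mono fun z hz => hw₀min ⟨z, hz, rfl⟩
    calc (0:ℝ) < gaussDensity d σ w₀ := gauss_pos hσ w₀
      _ = ∫ _z, gaussDensity d σ w₀ ∂μ := by simp
      _ ≤ _ := hmono
  -- derivative of log p
  have hlog : ∀ y, HasFDerivAt (fun t => Real.log (p t)) ((p y)⁻¹ • F1 y) y :=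
    fun y => (hp' y).log (hppos y).ne'
  have hΦeq : (fderiv ℝ fun y => Real.log (p y)) = fun y => (p y)⁻¹ • F1 y :=
    funext fun y => (hlog y).fderiv
  have hinv : HasFDerivAt (fun y => (p y)⁻¹) ((-(p x ^ 2)⁻¹) • F1 x) x :=
    (hasDerivAt_inv (hppos x).ne').comp_hasFDerivAt x (hp' x)
  have hΦ : HasFDerivAt (fun y => (p y)⁻¹ • F1 y)
      ((p x)⁻¹ • (∫ z, fderiv ℝ (fderiv ℝ (gaussDensity d σ)) (x - z) ∂μ)
        + ((-(p x ^ 2)⁻¹ : ℝ) • F1 x).smulRight (F1 x)) x := hinv.smul hF1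
  -- integrability facts
  haveI : IsFiniteMeasure μ := inferInstance
  set X : EuclideanSpace ℝ (Fin d) → ℝ := fun z => gaussDensity d σ (x - z) with hXdef
  have hXc : Continuous X := hgc.comp (continuous_const.sub continuous_id)
  have hprojc : ∀ i : Fin d, Continuous fun z : EuclideanSpace ℝ (Fin d) => z i :=
    fun i => (EuclideanSpace.proj i).continuous
  have hIX : Integrable X μ := integrable_aux μ hK hμK hXc
  have hIXi : ∀ i : Fin d, Integrable (fun z => X z * z i) μ :=
    fun i => integrable_aux μ hK hμK (hXc.mul (hprojc i))
  have hIXij : ∀ i j : Fin d, Integrable (fun z => X z * (z i * z j)) μ :=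
    fun i j => integrable_aux μ hK hμK (hXc.mul ((hprojc i).mul (hprojc j)))
  have hInt1 : Integrable (fun z => fderiv ℝ (gaussDensity d σ) (x - z)) μ :=
    integrable_aux μ hK hμK ((hgc1.continuous_fderiv one_ne_zero).comp
      (continuous_const.sub continuous_id))
  letI : ContinuousENorm (EuclideanSpace ℝ (Fin d) →L[ℝ] EuclideanSpace ℝ (Fin d) →L[ℝ] ℝ) :=
    @SeminormedAddGroup.toContinuousENorm _ ContinuousLinearMap.toSeminormedAddCommGroup.toSeminormedAddGroup
  have hInt2 : Integrable (fun z => fderiv ℝ (fderiv ℝ (gaussDensity d σ)) (x - z)) μ :=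
    integrable_aux μ hK hμK ((hgFd.continuous_fderiv one_ne_zero).comp
      (continuous_const.sub continuous_id))
  have hInt2i : ∀ i : Fin d, Integrable
      (fun z => fderiv ℝ (fderiv ℝ (gaussDensity d σ)) (x - z) (EuclideanSpace.single i 1)) μ :=
    fun i => integrable_aux μ hK hμK
      (((hgFd.continuous_fderiv one_ne_zero).comp (continuous_const.sub continuous_id)).clm_apply
        continuous_const)
  -- pointwise values of derivatives of the gaussian
  have hGval : ∀ (w : EuclideanSpace ℝ (Fin d)) (j : Fin d),
      fderiv ℝ (gaussDensity d σ) w (EuclideanSpace.single j 1)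
        = -σ⁻¹ ^ 2 * gaussDensity d σ w * w j := by
    intro w j
    rw [(hasFDerivAt_gauss hσ w).fderiv]
    simp [EuclideanSpace.inner_single_right]
  have hD2val : ∀ (w : EuclideanSpace ℝ (Fin d)) (i j : Fin d),
      fderiv ℝ (fderiv ℝ (gaussDensity d σ)) w (EuclideanSpace.single i 1)
          (EuclideanSpace.single j 1)
        = -σ⁻¹ ^ 2 * gaussDensity d σ w * (if i = j then 1 else 0)
          + σ⁻¹ ^ 2 * σ⁻¹ ^ 2 * gaussDensity d σ w * (w i * w j) := by
    intro w i j
    rw [(hasFDerivAt_fderiv_gauss hσ w).fderiv]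
    rcases eq_or_ne i j with h | h
    · subst h
      simp [EuclideanSpace.inner_single_right, EuclideanSpace.inner_single_left,
        EuclideanSpace.single_apply, real_inner_comm]
      try ring
    · simp [EuclideanSpace.inner_single_right, EuclideanSpace.inner_single_left,
        EuclideanSpace.single_apply, real_inner_comm, h, Ne.symm h]
      try ring
  -- the Hessian entries
  have hH : ∀ i j : Fin d,
      iteratedFDeriv ℝ 2 (fun y => Real.log (p y)) x
          ![EuclideanSpace.single i 1, EuclideanSpace.single j 1]
        = (p x)⁻¹ * ((∫ z, fderiv ℝ (fderiv ℝ (gaussDensity d σ)) (x - z) ∂μ)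
              (EuclideanSpace.single i 1) (EuclideanSpace.single j 1))
          + (-(p x ^ 2)⁻¹ * (F1 x (EuclideanSpace.single i 1))) * (F1 x (EuclideanSpace.single j 1)) := by
    intro i j
    rw [iteratedFDeriv_two_apply, hΦeq, hΦ.fderiv]
    simp [ContinuousLinearMap.add_apply, ContinuousLinearMap.smul_apply,
      ContinuousLinearMap.smulRight_apply]
    try ring
  -- scalar integrals
  set I0 : ℝ := ∫ z, X z ∂μ with hI0def
  have hpx : p x = I0 := hp x
  have hI0pos : 0 < I0 := by rw [← hpx]; exact hppos x
  have hmval : ∀ i : Fin d, m x i = (p x)⁻¹ * ∫ z, X z * z i ∂μ := by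
    intro i
    rw [hm x]
    change ((p x)⁻¹ • ∫ z, X z • z ∂μ) i = _
    have h1 : (∫ z, X z • z ∂μ) i = ∫ z, X z * z i ∂μ := by
      have := ((EuclideanSpace.proj (𝕜 := ℝ) i).integral_comp_comm
        (integrable_aux μ hK hμK (hXc.smul continuous_id))).symm
      simpa using this
    simp [PiLp.smul_apply, smul_eq_mul, h1]
  have hF1val : ∀ j : Fin d, F1 x (EuclideanSpace.single j 1)
      = -σ⁻¹ ^ 2 * (x j * I0 - ∫ z, X z * z j ∂μ) := by
    intro j
    rw [hF1def]
    rw [ContinuousLinearMap.integral_apply hInt1]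
    have he : (fun z => fderiv ℝ (gaussDensity d σ) (x - z) (EuclideanSpace.single j 1))
        = fun z => -σ⁻¹ ^ 2 * (x j * X z) - -σ⁻¹ ^ 2 * (X z * z j) := by
      funext z
      rw [hGval]
      simp only [hXdef, PiLp.sub_apply]
      ring
    rw [he, integral_sub ((hIX.const_mul _).const_mul _) ((hIXi j).const_mul _),
      integral_const_mul, integral_const_mul, integral_const_mul]
    ring
  have hD2int : ∀ i j : Fin d,
      (∫ z, fderiv ℝ (fderiv ℝ (gaussDensity d σ)) (x - z) ∂μ)
          (EuclideanSpace.single i 1) (EuclideanSpace.single j 1)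
        = -σ⁻¹ ^ 2 * (if i = j then 1 else 0) * I0
          + σ⁻¹ ^ 2 * σ⁻¹ ^ 2 * ((x i * x j) * I0 - x i * ∫ z, X z * z j ∂μ
              - x j * ∫ z, X z * z i ∂μ + ∫ z, X z * (z i * z j) ∂μ) := by
    intro i j
    rw [ContinuousLinearMap.integral_apply hInt2,
      ContinuousLinearMap.integral_apply (hInt2i i)]
    have he : (fun z => fderiv ℝ (fderiv ℝ (gaussDensity d σ)) (x - z)
        (EuclideanSpace.single i 1) (EuclideanSpace.single j 1))
        = fun z => (-σ⁻¹ ^ 2 * (if i = j then 1 else 0)) * X z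
          + σ⁻¹ ^ 2 * σ⁻¹ ^ 2 * ((x i * x j) * X z - x i * (X z * z j)
            - x j * (X z * z i) + X z * (z i * z j)) := by
      funext z
      rw [hD2val]
      simp only [hXdef, PiLp.sub_apply]
      ring
    have hIA : Integrable (fun z => (x i * x j) * X z - x i * (X z * z j)
        - x j * (X z * z i) + X z * (z i * z j)) μ :=
      (((hIX.const_mul _).sub ((hIXi j).const_mul _)).sub ((hIXi i).const_mul _)).add (hIXij i j)
    have hB1 : Integrable (fun z => (x i * x j) * X z - x i * (X z * z j)) μ :=
      (hIX.const_mul _).sub ((hIXi j).const_mul _)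
    have hB2 : Integrable (fun z => (x i * x j) * X z - x i * (X z * z j)
        - x j * (X z * z i)) μ := hB1.sub ((hIXi i).const_mul _)
    rw [he, integral_add (hIX.const_mul _) (hIA.const_mul _), integral_const_mul,
      integral_const_mul,
      integral_add hB2 (hIXij i j),
      integral_sub hB1 ((hIXi i).const_mul _),
      integral_sub (hIX.const_mul _) ((hIXi j).const_mul _),
      integral_const_mul, integral_const_mul, integral_const_mul]
  -- the covariance integral
  have hcov : ∀ i j : Fin d,
      ∫ z, gaussDensity d σ (x - z) * ((z i - m x i) * (z j - m x j)) ∂μ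
        = ∫ z, X z * (z i * z j) ∂μ - m x j * ∫ z, X z * z i ∂μ
          - m x i * ∫ z, X z * z j ∂μ + (m x i * m x j) * I0 := by
    intro i j
    have he : (fun z => gaussDensity d σ (x - z) * ((z i - m x i) * (z j - m x j)))
        = fun z => X z * (z i * z j) - m x j * (X z * z i)
          - m x i * (X z * z j) + (m x i * m x j) * X z := by
      funext z
      simp only [hXdef]
      ring
    have h1 : Integrable (fun z => X z * (z i * z j) - m x j * (X z * z i)) μ :=
      (hIXij i j).sub ((hIXi i).const_mul _)
    have h2 : Integrable (fun z => X z * (z i * z j) - m x j * (X z * z i)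
        - m x i * (X z * z j)) μ := h1.sub ((hIXi j).const_mul _)
    rw [he, integral_add h2 (hIX.const_mul _), integral_sub h1 ((hIXi j).const_mul _),
      integral_sub (hIXij i j) ((hIXi i).const_mul _),
      integral_const_mul, integral_const_mul, integral_const_mul]
  -- assemble
  ext i j
  simp only [Matrix.of_apply, Matrix.add_apply, Matrix.smul_apply, Matrix.one_apply,
    smul_eq_mul]
  rw [hcov i j, hH i j, hD2int i j, hF1val i, hF1val j, hmval i, hmval j, hpx]
  have hI0ne : I0 ≠ 0 := hI0pos.ne'
  split_ifs with hij <;> (field_simp; ring)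
end

section
/- Let μ be a compactly supported probability measure on ℝ^d, s ≠ 0, σ > 0, p(x) = ∫ φ_σ(x − s·z) dμ(z), and let m(x) = (∫ z · φ_σ(x − s·z) dμ(z)) / p(x) be the posterior mean. Then for every x ∈ ℝ^d the posterior covariance matrix satisfies (∫ (z − m(x))(z − m(x))ᵀ φ_σ(x − s·z) dμ(z)) / p(x) = (σ²/s²)(I + σ² ∇² log p(x)). -/
open MeasureTheory Filter Real
set_option maxHeartbeats 1000000
set_option synthInstance.maxHeartbeats 400000

variable {d : ℕ} {σ : ℝ}

lemma gaussDensity_pos (hσ : σ ≠ 0) (w : EuclideanSpace ℝ (Fin d)) :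
    0 < gaussDensity d σ w := by
  have h2 : (0:ℝ) < 2 * π * σ ^ 2 := by positivity
  exact mul_pos (Real.rpow_pos_of_pos h2 _) (Real.exp_pos _)

lemma gaussDensity_le (w : EuclideanSpace ℝ (Fin d)) :
    gaussDensity d σ w ≤ (2 * π * σ ^ 2) ^ (-(d : ℝ) / 2) := by
  have h1 : Real.exp (-‖w‖ ^ 2 / (2 * σ ^ 2)) ≤ 1 := by
    apply Real.exp_le_one_iff.mpr
    have : (0:ℝ) ≤ ‖w‖^2 / (2 * σ^2) := by positivity
    rw [neg_div]; linarith
  have h2 : (0:ℝ) ≤ (2 * π * σ ^ 2) ^ (-(d : ℝ) / 2) := by positivity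
  calc gaussDensity d σ w ≤ (2 * π * σ ^ 2) ^ (-(d : ℝ) / 2) * 1 := by
        unfold gaussDensity; exact mul_le_mul_of_nonneg_left h1 h2
    _ = _ := mul_one _

lemma gaussDensity_continuous : Continuous (gaussDensity d σ) := by
  unfold gaussDensity
  fun_prop

lemma gaussDensity_hasFDerivAt (hσ : σ ≠ 0) (w : EuclideanSpace ℝ (Fin d)) :
    HasFDerivAt (gaussDensity d σ)
      ((-(σ ^ 2)⁻¹ * gaussDensity d σ w) • innerSL ℝ w) w := by
  have h0 : HasFDerivAt (fun v : EuclideanSpace ℝ (Fin d) => ‖v‖ ^ 2)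
      (2 • innerSL ℝ w) w := by
    simpa using (hasFDerivAt_id w).norm_sq
  have hfun : gaussDensity d σ = fun v : EuclideanSpace ℝ (Fin d) =>
      (2 * π * σ ^ 2) ^ (-(d : ℝ) / 2) * Real.exp ((2 * σ ^ 2)⁻¹ * -‖v‖ ^ 2) := by
    funext v; unfold gaussDensity
    rw [show -‖v‖ ^ 2 / (2 * σ ^ 2) = (2 * σ ^ 2)⁻¹ * -‖v‖ ^ 2 by ring]
  rw [hfun]
  have h1 := h0.neg.const_mul (2 * σ ^ 2)⁻¹
  have h2 := (h1.exp).const_mul ((2 * π * σ ^ 2) ^ (-(d : ℝ) / 2))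
  refine h2.congr_fderiv ?_
  ext v
  simp
  ring

noncomputable def innerB (d : ℕ) :
    EuclideanSpace ℝ (Fin d) →L[ℝ] EuclideanSpace ℝ (Fin d) →L[ℝ] ℝ :=
  (isBoundedBilinearMap_inner (𝕜 := ℝ) (E := EuclideanSpace ℝ (Fin d))).toContinuousLinearMap

lemma innerB_apply (u v : EuclideanSpace ℝ (Fin d)) : innerB d u v = (inner ℝ u v : ℝ) := rfl

lemma innerB_op_norm_le (u : EuclideanSpace ℝ (Fin d)) : ‖innerB d u‖ ≤ ‖u‖ :=
  ContinuousLinearMap.opNorm_le_bound _ (norm_nonneg u) fun v => by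
    rw [innerB_apply]; exact abs_real_inner_le_norm u v

lemma innerB_norm_le : ‖innerB d‖ ≤ 1 :=
  ContinuousLinearMap.opNorm_le_bound _ zero_le_one fun u => by
    rw [one_mul]; exact innerB_op_norm_le u

lemma innerB_eq_innerSL (u : EuclideanSpace ℝ (Fin d)) : innerB d u = innerSL ℝ u := by
  ext v; rfl

noncomputable def gD1 (d : ℕ) (σ : ℝ) (w : EuclideanSpace ℝ (Fin d)) :
    EuclideanSpace ℝ (Fin d) →L[ℝ] ℝ :=
  (-(σ ^ 2)⁻¹ * gaussDensity d σ w) • innerB d w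

noncomputable def gD2 (d : ℕ) (σ : ℝ) (w : EuclideanSpace ℝ (Fin d)) :
    EuclideanSpace ℝ (Fin d) →L[ℝ] EuclideanSpace ℝ (Fin d) →L[ℝ] ℝ :=
  (((σ ^ 2)⁻¹) ^ 2 * gaussDensity d σ w) • (innerB d w).smulRight (innerB d w)
    + (-(σ ^ 2)⁻¹ * gaussDensity d σ w) • innerB d

noncomputable instance instNormedAddCommGroupCLM2 :
    NormedAddCommGroup (EuclideanSpace ℝ (Fin d) →L[ℝ] EuclideanSpace ℝ (Fin d) →L[ℝ] ℝ) :=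
  ContinuousLinearMap.toNormedAddCommGroup

lemma gD1_apply (w v : EuclideanSpace ℝ (Fin d)) :
    gD1 d σ w v = -(σ ^ 2)⁻¹ * gaussDensity d σ w * (inner ℝ w v : ℝ) := by
  simp [gD1, innerB_apply]

lemma gD2_apply (w u v : EuclideanSpace ℝ (Fin d)) :
    gD2 d σ w u v = ((σ ^ 2)⁻¹) ^ 2 * gaussDensity d σ w * ((inner ℝ w u : ℝ) * (inner ℝ w v : ℝ))
      - (σ ^ 2)⁻¹ * gaussDensity d σ w * (inner ℝ u v : ℝ) := by
  simp [gD2, innerB_apply]; ring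

lemma gauss_hasFDerivAt' (hσ : σ ≠ 0) (w : EuclideanSpace ℝ (Fin d)) :
    HasFDerivAt (gaussDensity d σ) (gD1 d σ w) w := by
  have e : gD1 d σ w = (-(σ ^ 2)⁻¹ * gaussDensity d σ w) • innerSL ℝ w := by
    rw [gD1, innerB_eq_innerSL]
  rw [e]
  exact gaussDensity_hasFDerivAt hσ w

lemma gD1_continuous (hσ : σ ≠ 0) : Continuous (gD1 d σ) :=
  (continuous_const.mul gaussDensity_continuous).smul (innerB d).continuous

lemma gD2_continuous (hσ : σ ≠ 0) : Continuous (gD2 d σ) := by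
  apply Continuous.fun_add
  · apply Continuous.smul (continuous_const.mul gaussDensity_continuous)
    exact ((ContinuousLinearMap.smulRightL ℝ (EuclideanSpace ℝ (Fin d))
      (EuclideanSpace ℝ (Fin d) →L[ℝ] ℝ)).isBoundedBilinearMap.continuous).comp
      ((innerB d).continuous.prodMk (innerB d).continuous)
  · exact (continuous_const.mul gaussDensity_continuous).smul continuous_const

lemma gD1_hasFDerivAt (hσ : σ ≠ 0) (w : EuclideanSpace ℝ (Fin d)) :
    HasFDerivAt (gD1 d σ) (gD2 d σ w) w := by
  have hc : HasFDerivAt (fun v : EuclideanSpace ℝ (Fin d) => -(σ ^ 2)⁻¹ * gaussDensity d σ v)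
      ((-(σ ^ 2)⁻¹) • gD1 d σ w) w := (gauss_hasFDerivAt' hσ w).const_mul _
  have hf : HasFDerivAt (fun v : EuclideanSpace ℝ (Fin d) => innerB d v) (innerB d) w :=
    (innerB d).hasFDerivAt
  have hD : HasFDerivAt (fun v : EuclideanSpace ℝ (Fin d) =>
        (-(σ ^ 2)⁻¹ * gaussDensity d σ v) • innerB d v)
      ((-(σ ^ 2)⁻¹ * gaussDensity d σ w) • innerB d
        + ((-(σ ^ 2)⁻¹) • gD1 d σ w).smulRight (innerB d w)) w := by exact HasFDerivAt.smul (𝕜' := ℝ) hc hf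
  have hD' : HasFDerivAt (gD1 d σ)
      ((-(σ ^ 2)⁻¹ * gaussDensity d σ w) • innerB d
        + ((-(σ ^ 2)⁻¹) • gD1 d σ w).smulRight (innerB d w)) w := hD
  convert hD' using 1
  ext u v
  simp [gD2, gD1, innerB_apply]
  ring

lemma gD1_norm_le (hσ : σ ≠ 0) (w : EuclideanSpace ℝ (Fin d)) :
    ‖gD1 d σ w‖ ≤ (σ ^ 2)⁻¹ * (2 * π * σ ^ 2) ^ (-(d : ℝ) / 2) * ‖w‖ := by
  have h0 : (0:ℝ) < (σ^2)⁻¹ := by positivity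
  calc ‖gD1 d σ w‖ ≤ ‖(-(σ ^ 2)⁻¹ * gaussDensity d σ w)‖ * ‖innerB d w‖ := by
        rw [gD1]; exact ContinuousLinearMap.opNorm_smul_le _ _
    _ ≤ ((σ ^ 2)⁻¹ * (2 * π * σ ^ 2) ^ (-(d : ℝ) / 2)) * ‖w‖ := by
        apply mul_le_mul _ (innerB_op_norm_le w) (norm_nonneg _) (by positivity)
        rw [norm_mul, norm_neg, norm_inv]
        have := gaussDensity_pos hσ w
        have h2 := gaussDensity_le (σ := σ) w
        rw [Real.norm_eq_abs, Real.norm_eq_abs, abs_of_pos this, abs_of_pos (by positivity : (0:ℝ) < σ^2)]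
        exact mul_le_mul_of_nonneg_left h2 (le_of_lt (by positivity))

lemma gD2_norm_le (hσ : σ ≠ 0) (w : EuclideanSpace ℝ (Fin d)) :
    ‖gD2 d σ w‖ ≤ (2 * π * σ ^ 2) ^ (-(d : ℝ) / 2) *
      ((((σ ^ 2)⁻¹) ^ 2) * ‖w‖ ^ 2 + (σ ^ 2)⁻¹) := by
  have hφ := gaussDensity_pos hσ w
  have hφle := gaussDensity_le (σ := σ) w
  have h1 : ‖(innerB d w).smulRight (innerB d w)‖ ≤ ‖w‖ ^ 2 := by
    rw [ContinuousLinearMap.norm_smulRight_apply]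
    calc ‖innerB d w‖ * ‖innerB d w‖ ≤ ‖w‖ * ‖w‖ :=
          mul_le_mul (innerB_op_norm_le w) (innerB_op_norm_le w) (norm_nonneg _) (norm_nonneg _)
      _ = ‖w‖ ^ 2 := (sq ‖w‖).symm
  have hA : ‖(((σ ^ 2)⁻¹) ^ 2 * gaussDensity d σ w) • (innerB d w).smulRight (innerB d w)‖
      ≤ ((σ ^ 2)⁻¹) ^ 2 * gaussDensity d σ w * ‖w‖ ^ 2 := by
    refine (ContinuousLinearMap.opNorm_smul_le (((σ ^ 2)⁻¹) ^ 2 * gaussDensity d σ w)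
      ((innerB d w).smulRight (innerB d w))).trans ?_
    rw [Real.norm_eq_abs, abs_of_pos (by positivity)]
    exact mul_le_mul_of_nonneg_left h1 (by positivity)
  have hB : ‖(-(σ ^ 2)⁻¹ * gaussDensity d σ w) • innerB d‖
      ≤ (σ ^ 2)⁻¹ * gaussDensity d σ w := by
    refine (ContinuousLinearMap.opNorm_smul_le (-(σ ^ 2)⁻¹ * gaussDensity d σ w) (innerB d)).trans ?_
    have he : ‖(-(σ ^ 2)⁻¹ * gaussDensity d σ w)‖ = (σ ^ 2)⁻¹ * gaussDensity d σ w := by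
      rw [Real.norm_eq_abs, abs_mul, abs_neg, abs_inv, abs_of_pos (by positivity : (0:ℝ) < σ ^ 2),
        abs_of_pos hφ]
    rw [he]
    calc (σ ^ 2)⁻¹ * gaussDensity d σ w * ‖innerB d‖
        ≤ (σ ^ 2)⁻¹ * gaussDensity d σ w * 1 :=
          mul_le_mul_of_nonneg_left innerB_norm_le (by positivity)
      _ = _ := mul_one _
  rw [gD2]
  refine le_trans (norm_add_le
    ((((σ ^ 2)⁻¹) ^ 2 * gaussDensity d σ w) • (innerB d w).smulRight (innerB d w))
    ((-(σ ^ 2)⁻¹ * gaussDensity d σ w) • innerB d)) ?_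
  refine (add_le_add hA hB).trans ?_
  nlinarith [mul_le_mul_of_nonneg_left (mul_le_mul_of_nonneg_right hφle (sq_nonneg ‖w‖))
      (by positivity : (0:ℝ) ≤ ((σ^2)⁻¹)^2),
    mul_le_mul_of_nonneg_left hφle (by positivity : (0:ℝ) ≤ (σ^2)⁻¹)]

section Meas

variable (μ : Measure (EuclideanSpace ℝ (Fin d))) [IsProbabilityMeasure μ]
  (K : Set (EuclideanSpace ℝ (Fin d)))

lemma ae_of_K (hμK : μ Kᶜ = 0) {P : EuclideanSpace ℝ (Fin d) → Prop} (h : ∀ z ∈ K, P z) :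
    ∀ᵐ z ∂μ, P z := by
  rw [ae_iff]
  refine measure_mono_null (fun z hz hzK => hz (h z hzK)) hμK

lemma integrable_of_cont (hK : IsCompact K) (hμK : μ Kᶜ = 0) {V : Type} [NormedAddCommGroup V]
    (g : EuclideanSpace ℝ (Fin d) → V) (hg : Continuous g) : Integrable g μ := by
  obtain ⟨C, hC⟩ := hK.exists_bound_of_continuousOn hg.continuousOn
  refine Integrable.mono' (integrable_const C) hg.aestronglyMeasurable ?_
  exact ae_of_K μ K hμK hC

lemma norm_sub_smul_le (x₀ : EuclideanSpace ℝ (Fin d)) (s R : ℝ)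
    (x z : EuclideanSpace ℝ (Fin d)) (hx : x ∈ Metric.ball x₀ 1)
    (hz : z ∈ Metric.closedBall (0 : EuclideanSpace ℝ (Fin d)) R) :
    ‖x - s • z‖ ≤ ‖x₀‖ + 1 + |s| * R := by
  have hx' : ‖x‖ ≤ ‖x₀‖ + 1 := by
    have h1 := mem_ball_iff_norm.mp hx
    have h2 : ‖x‖ - ‖x₀‖ ≤ ‖x - x₀‖ := norm_sub_norm_le x x₀
    linarith
  have hz' : ‖z‖ ≤ R := by simpa [Metric.mem_closedBall] using hz
  calc ‖x - s • z‖ ≤ ‖x‖ + ‖s • z‖ := norm_sub_le _ _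
    _ = ‖x‖ + |s| * ‖z‖ := by rw [norm_smul, Real.norm_eq_abs]
    _ ≤ ‖x₀‖ + 1 + |s| * R := by
        have : |s| * ‖z‖ ≤ |s| * R := mul_le_mul_of_nonneg_left hz' (abs_nonneg s)
        linarith

lemma comp_shift {V : Type} [NormedAddCommGroup V] [NormedSpace ℝ V]
    {f : EuclideanSpace ℝ (Fin d) → V} {f' : EuclideanSpace ℝ (Fin d) →L[ℝ] V}
    (s : ℝ) (z x : EuclideanSpace ℝ (Fin d)) (h : HasFDerivAt f f' (x - s • z)) :
    HasFDerivAt (fun y => f (y - s • z)) f' x := by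
  have hi : HasFDerivAt (fun y : EuclideanSpace ℝ (Fin d) => y - s • z)
      (ContinuousLinearMap.id ℝ (EuclideanSpace ℝ (Fin d))) x :=
    (hasFDerivAt_id x).sub_const _
  have := h.comp x hi
  simp only [ContinuousLinearMap.comp_id] at this
  exact this

lemma hasFDerivAt_p (hK : IsCompact K) (hμK : μ Kᶜ = 0) (hσ : σ ≠ 0) (s : ℝ) (x : EuclideanSpace ℝ (Fin d)) :
    HasFDerivAt (fun y => ∫ z, gaussDensity d σ (y - s • z) ∂μ)
      (∫ z, gD1 d σ (x - s • z) ∂μ) x := by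
  obtain ⟨R, hR⟩ := hK.isBounded.subset_closedBall 0
  set c := (2 * π * σ ^ 2) ^ (-(d : ℝ) / 2) with hc
  set M := ‖x‖ + 1 + |s| * R with hM
  apply hasFDerivAt_integral_of_dominated_of_fderiv_le (F' := fun y z => gD1 d σ (y - s • z))
    (bound := fun _ => (σ ^ 2)⁻¹ * c * M) (Metric.ball_mem_nhds x one_pos)
  · exact Eventually.of_forall fun y =>
      (gaussDensity_continuous.comp (continuous_const.sub (continuous_id.const_smul s))).aestronglyMeasurable
  · exact integrable_of_cont μ K hK hμK _
      (gaussDensity_continuous.comp (continuous_const.sub (continuous_id.const_smul s)))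
  · exact ((gD1_continuous hσ).comp (continuous_const.sub (continuous_id.const_smul s))).aestronglyMeasurable
  · refine ae_of_K μ K hμK fun z hz y hy => ?_
    refine (gD1_norm_le hσ _).trans ?_
    have hMn : (0:ℝ) ≤ (σ ^ 2)⁻¹ * c := by positivity
    have := norm_sub_smul_le x s R y z hy (hR hz)
    exact mul_le_mul_of_nonneg_left this hMn
  · exact integrable_const _
  · refine Eventually.of_forall fun z y _ => ?_
    exact comp_shift s z y (gauss_hasFDerivAt' hσ _)

lemma hasFDerivAt_p1 (hK : IsCompact K) (hμK : μ Kᶜ = 0) (hσ : σ ≠ 0) (s : ℝ) (x : EuclideanSpace ℝ (Fin d)) :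
    HasFDerivAt (fun y => ∫ z, gD1 d σ (y - s • z) ∂μ)
      (∫ z, gD2 d σ (x - s • z) ∂μ) x := by
  obtain ⟨R, hR⟩ := hK.isBounded.subset_closedBall 0
  set c := (2 * π * σ ^ 2) ^ (-(d : ℝ) / 2) with hc
  set M := ‖x‖ + 1 + |s| * R with hM
  apply hasFDerivAt_integral_of_dominated_of_fderiv_le (F' := fun y z => gD2 d σ (y - s • z))
    (bound := fun _ => c * ((((σ ^ 2)⁻¹) ^ 2) * M ^ 2 + (σ ^ 2)⁻¹)) (Metric.ball_mem_nhds x one_pos)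
  · exact Eventually.of_forall fun y =>
      ((gD1_continuous hσ).comp (continuous_const.sub (continuous_id.const_smul s))).aestronglyMeasurable
  · exact integrable_of_cont μ K hK hμK _
      ((gD1_continuous hσ).comp (continuous_const.sub (continuous_id.const_smul s)))
  · exact ((gD2_continuous hσ).comp (continuous_const.sub (continuous_id.const_smul s))).aestronglyMeasurable
  · refine ae_of_K μ K hμK fun z hz y hy => ?_
    refine (gD2_norm_le hσ _).trans ?_
    have hcn : (0:ℝ) ≤ c := by positivity
    have h1 := norm_sub_smul_le x s R y z hy (hR hz)
    have h2 : ‖y - s • z‖ ^ 2 ≤ M ^ 2 := by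
      have := norm_nonneg (y - s • z); nlinarith
    have : (((σ ^ 2)⁻¹) ^ 2) * ‖y - s • z‖ ^ 2 + (σ ^ 2)⁻¹
        ≤ (((σ ^ 2)⁻¹) ^ 2) * M ^ 2 + (σ ^ 2)⁻¹ := by
      have := mul_le_mul_of_nonneg_left h2 (by positivity : (0:ℝ) ≤ ((σ ^ 2)⁻¹) ^ 2)
      linarith
    exact mul_le_mul_of_nonneg_left this hcn
  · exact integrable_const _
  · refine Eventually.of_forall fun z y _ => ?_
    exact comp_shift s z y (gD1_hasFDerivAt hσ _)

lemma p_pos (hK : IsCompact K) (hμK : μ Kᶜ = 0) (hσ : σ ≠ 0) (s : ℝ) (x : EuclideanSpace ℝ (Fin d)) :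
    0 < ∫ z, gaussDensity d σ (x - s • z) ∂μ := by
  obtain ⟨R, hR⟩ := hK.isBounded.subset_closedBall 0
  set c := (2 * π * σ ^ 2) ^ (-(d : ℝ) / 2) with hc
  set M := ‖x‖ + |s| * R with hM
  set ε₀ := c * Real.exp (-M ^ 2 / (2 * σ ^ 2)) with hε₀
  have hε₀pos : 0 < ε₀ := by positivity
  have hlow : ∀ z ∈ K, ε₀ ≤ gaussDensity d σ (x - s • z) := by
    intro z hz
    have hzR : ‖z‖ ≤ R := by simpa using hR hz
    have hw : ‖x - s • z‖ ≤ M := by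
      calc ‖x - s • z‖ ≤ ‖x‖ + ‖s • z‖ := norm_sub_le _ _
        _ ≤ ‖x‖ + |s| * R := by
            rw [norm_smul, Real.norm_eq_abs]
            have := mul_le_mul_of_nonneg_left hzR (abs_nonneg s)
            linarith
    unfold gaussDensity
    rw [hε₀, hc]
    apply mul_le_mul_of_nonneg_left _ (by positivity)
    apply Real.exp_le_exp.mpr
    rw [div_eq_mul_inv, div_eq_mul_inv]
    apply mul_le_mul_of_nonneg_right _ (by positivity)
    have h2 : ‖x - s • z‖ ^ 2 ≤ M ^ 2 := by
      have := norm_nonneg (x - s • z); nlinarith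
    linarith
  have hint : Integrable (fun z => gaussDensity d σ (x - s • z)) μ :=
    integrable_of_cont μ K hK hμK _
      (gaussDensity_continuous.comp (continuous_const.sub (continuous_id.const_smul s)))
  have : ε₀ = ∫ _, ε₀ ∂μ := by simp
  calc (0:ℝ) < ε₀ := hε₀pos
    _ = ∫ _, ε₀ ∂μ := this
    _ ≤ ∫ z, gaussDensity d σ (x - s • z) ∂μ :=
      integral_mono_ae (integrable_const _) hint (ae_of_K μ K hμK hlow)

end Meas


/-- **Tweedie's covariance formula with scaling.** For a compactly supported probability
measure `μ` on `ℝ^d`, scalars `s ≠ 0`, `σ > 0`, `p(x) = ∫ φ_σ(x - s z) dμ(z)` and posterior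
mean `m(x) = (∫ z φ_σ(x - s z) dμ(z)) / p(x)`, the posterior covariance matrix satisfies
`(∫ (z - m)(z - m)ᵀ φ_σ(x - s z) dμ(z)) / p(x) = (σ²/s²)(I + σ² ∇² log p(x))`. -/
theorem tweedie_covariance_scaled {d : ℕ} (μ : Measure (EuclideanSpace ℝ (Fin d)))
    [IsProbabilityMeasure μ] (K : Set (EuclideanSpace ℝ (Fin d)))
    (hK : IsCompact K) (hμK : μ Kᶜ = 0)
    (s σ : ℝ) (hs : s ≠ 0) (hσ : 0 < σ)
    (p : EuclideanSpace ℝ (Fin d) → ℝ)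
    (hp : ∀ x, p x = ∫ z, gaussDensity d σ (x - s • z) ∂μ)
    (m : EuclideanSpace ℝ (Fin d) → EuclideanSpace ℝ (Fin d))
    (hm : ∀ x, m x = (p x)⁻¹ • (∫ z, gaussDensity d σ (x - s • z) • z ∂μ)) :
    ∀ x, (Matrix.of fun i j =>
        (p x)⁻¹ * ∫ z, gaussDensity d σ (x - s • z) * ((z i - m x i) * (z j - m x j)) ∂μ)
      = (σ ^ 2 / s ^ 2) • ((1 : Matrix (Fin d) (Fin d) ℝ) +
          σ ^ 2 • (Matrix.of fun i j =>
            iteratedFDeriv ℝ 2 (fun y => Real.log (p y)) x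
              ![EuclideanSpace.single i 1, EuclideanSpace.single j 1])) := by
  intro x
  have hσ' : σ ≠ 0 := ne_of_gt hσ
  have hpe : p = fun y => ∫ z, gaussDensity d σ (y - s • z) ∂μ := funext hp
  have hshiftc : Continuous (fun z : EuclideanSpace ℝ (Fin d) => x - s • z) :=
    continuous_const.sub (continuous_id.const_smul s)
  have hcontφ : Continuous (fun z => gaussDensity d σ (x - s • z)) :=
    gaussDensity_continuous.comp hshiftc
  have hcoord : ∀ i : Fin d, Continuous (fun z : EuclideanSpace ℝ (Fin d) => z i) :=
    fun i => (EuclideanSpace.proj (𝕜 := ℝ) i).continuous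
  -- positivity of p
  have hppos : ∀ y, 0 < p y := fun y => by rw [hp y]; exact p_pos μ K hK hμK hσ' s y
  have hpne : p x ≠ 0 := ne_of_gt (hppos x)
  -- integrability
  have hInt0 : Integrable (fun z => gaussDensity d σ (x - s • z)) μ :=
    integrable_of_cont μ K hK hμK _ hcontφ
  have hInti : ∀ i, Integrable (fun z => gaussDensity d σ (x - s • z) * z i) μ :=
    fun i => integrable_of_cont μ K hK hμK _ (hcontφ.mul (hcoord i))
  have hIntij : ∀ i j,
      Integrable (fun z => gaussDensity d σ (x - s • z) * (z i * z j)) μ :=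
    fun i j => integrable_of_cont μ K hK hμK _ (hcontφ.mul ((hcoord i).mul (hcoord j)))
  have hIntE : Integrable (fun z => gaussDensity d σ (x - s • z) • z) μ :=
    integrable_of_cont μ K hK hμK _ (hcontφ.smul continuous_id)
  have hIntgD1 : Integrable (fun z => gD1 d σ (x - s • z)) μ :=
    integrable_of_cont μ K hK hμK _ ((gD1_continuous hσ').comp hshiftc)
  have hIntgD2 : Integrable (fun z => gD2 d σ (x - s • z)) μ :=
    integrable_of_cont μ K hK hμK _ ((gD2_continuous hσ').comp hshiftc)
  have hIntgD2i : ∀ i, Integrable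
      (fun z => gD2 d σ (x - s • z) (EuclideanSpace.single i 1)) μ :=
    fun i => integrable_of_cont μ K hK hμK _
      (((ContinuousLinearMap.apply ℝ (EuclideanSpace ℝ (Fin d) →L[ℝ] ℝ)
        (EuclideanSpace.single i (1:ℝ))).continuous).comp ((gD2_continuous hσ').comp hshiftc))
  -- scalar integrals
  set J0 : ℝ := ∫ z, gaussDensity d σ (x - s • z) ∂μ with hJ0
  set Ji : Fin d → ℝ := fun i => ∫ z, gaussDensity d σ (x - s • z) * z i ∂μ with hJi
  set Jij : Fin d → Fin d → ℝ :=
    fun i j => ∫ z, gaussDensity d σ (x - s • z) * (z i * z j) ∂μ with hJij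
  have hA : p x = J0 := hp x
  -- coordinates of w
  have hwc : ∀ (z : EuclideanSpace ℝ (Fin d)) (i : Fin d),
      (x - s • z) i = x i - s * z i := fun z i => by
    simp [PiLp.sub_apply, PiLp.smul_apply, smul_eq_mul]
  have hinnerw : ∀ (z : EuclideanSpace ℝ (Fin d)) (i : Fin d),
      (inner ℝ (x - s • z) (EuclideanSpace.single i (1:ℝ)) : ℝ) = x i - s * z i := fun z i => by
    rw [EuclideanSpace.inner_single_right]
    simp [hwc z i]
  have hinner1 : ∀ i j : Fin d,
      (inner ℝ (EuclideanSpace.single i (1:ℝ)) (EuclideanSpace.single j (1:ℝ)) : ℝ)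
        = if i = j then 1 else 0 := fun i j => by
    rw [EuclideanSpace.inner_single_left]
    simp [EuclideanSpace.single_apply, eq_comm]
  -- combo splitting
  have combo4 : ∀ (c0 c1 c2 c3 : ℝ) (f0 f1 f2 f3 : EuclideanSpace ℝ (Fin d) → ℝ),
      Integrable f0 μ → Integrable f1 μ → Integrable f2 μ → Integrable f3 μ →
      ∫ z, (c0 * f0 z + c1 * f1 z + c2 * f2 z + c3 * f3 z) ∂μ
        = c0 * ∫ z, f0 z ∂μ + c1 * ∫ z, f1 z ∂μ + c2 * ∫ z, f2 z ∂μ + c3 * ∫ z, f3 z ∂μ := by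
    intro c0 c1 c2 c3 f0 f1 f2 f3 h0 h1 h2 h3
    have h01 : Integrable (fun z => c0 * f0 z + c1 * f1 z) μ :=
      (h0.const_mul c0).add (h1.const_mul c1)
    have h012 : Integrable (fun z => c0 * f0 z + c1 * f1 z + c2 * f2 z) μ :=
      h01.add (h2.const_mul c2)
    rw [integral_add h012 (h3.const_mul c3), integral_add h01 (h2.const_mul c2),
      integral_add (h0.const_mul c0) (h1.const_mul c1),
      integral_const_mul, integral_const_mul, integral_const_mul, integral_const_mul]
  -- evaluation of first derivative integral
  have hP1e : ∀ i, (∫ z, gD1 d σ (x - s • z) ∂μ) (EuclideanSpace.single i 1)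
      = -(σ ^ 2)⁻¹ * (x i * J0 - s * Ji i) := by
    intro i
    rw [ContinuousLinearMap.integral_apply hIntgD1]
    have he : (fun z => gD1 d σ (x - s • z) (EuclideanSpace.single i 1))
        = fun z => (-(σ ^ 2)⁻¹ * x i) * gaussDensity d σ (x - s • z)
            + ((σ ^ 2)⁻¹ * s) * (gaussDensity d σ (x - s • z) * z i)
            + (0:ℝ) * gaussDensity d σ (x - s • z)
            + (0:ℝ) * gaussDensity d σ (x - s • z) := by
      funext z
      rw [gD1_apply, hinnerw z i]
      ring
    rw [he, combo4 _ _ _ _ _ _ _ _ hInt0 (hInti i) hInt0 hInt0]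
    ring
  -- evaluation of second derivative integral
  have hP2e : ∀ i j, (∫ z, gD2 d σ (x - s • z) ∂μ)
        (EuclideanSpace.single i 1) (EuclideanSpace.single j 1)
      = (((σ ^ 2)⁻¹) ^ 2 * (x i * x j) - (σ ^ 2)⁻¹ * (if i = j then 1 else 0)) * J0
        + (-(((σ ^ 2)⁻¹) ^ 2 * s) * x j) * Ji i
        + (-(((σ ^ 2)⁻¹) ^ 2 * s) * x i) * Ji j
        + (((σ ^ 2)⁻¹) ^ 2 * s ^ 2) * Jij i j := by
    intro i j
    rw [ContinuousLinearMap.integral_apply hIntgD2,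
      ContinuousLinearMap.integral_apply (hIntgD2i i)]
    have he : (fun z => gD2 d σ (x - s • z) (EuclideanSpace.single i 1)
          (EuclideanSpace.single j 1))
        = fun z => (((σ ^ 2)⁻¹) ^ 2 * (x i * x j) - (σ ^ 2)⁻¹ * (if i = j then 1 else 0))
              * gaussDensity d σ (x - s • z)
            + (-(((σ ^ 2)⁻¹) ^ 2 * s) * x j) * (gaussDensity d σ (x - s • z) * z i)
            + (-(((σ ^ 2)⁻¹) ^ 2 * s) * x i) * (gaussDensity d σ (x - s • z) * z j)
            + (((σ ^ 2)⁻¹) ^ 2 * s ^ 2) * (gaussDensity d σ (x - s • z) * (z i * z j)) := by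
      funext z
      rw [gD2_apply, hinnerw z i, hinnerw z j, hinner1 i j]
      ring
    rw [he, combo4 _ _ _ _ _ _ _ _ hInt0 (hInti i) (hInti j) (hIntij i j)]
  -- posterior mean coordinates
  have hmi : ∀ i, m x i = (p x)⁻¹ * Ji i := by
    intro i
    rw [hm x]
    have h1 : (∫ z, gaussDensity d σ (x - s • z) • z ∂μ) i = Ji i := by
      have h2 := (EuclideanSpace.proj (𝕜 := ℝ) i).integral_comp_comm hIntE
      have h3 : (fun z => EuclideanSpace.proj (𝕜 := ℝ) i (gaussDensity d σ (x - s • z) • z))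
          = fun z => gaussDensity d σ (x - s • z) * z i := by
        funext z; simp [smul_eq_mul]
      rw [h3] at h2
      have h4 : EuclideanSpace.proj (𝕜 := ℝ) i (∫ z, gaussDensity d σ (x - s • z) • z ∂μ)
          = (∫ z, gaussDensity d σ (x - s • z) • z ∂μ) i := rfl
      rw [h4] at h2
      exact h2.symm ▸ rfl
    calc ((p x)⁻¹ • (∫ z, gaussDensity d σ (x - s • z) • z ∂μ)) i
        = (p x)⁻¹ * (∫ z, gaussDensity d σ (x - s • z) • z ∂μ) i := by
          simp [PiLp.smul_apply, smul_eq_mul]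
      _ = (p x)⁻¹ * Ji i := by rw [h1]
  -- the derivative chain
  have hlog : ∀ y, HasFDerivAt (fun t => Real.log (p t))
      ((p y)⁻¹ • (∫ z, gD1 d σ (y - s • z) ∂μ)) y := by
    intro y
    have h1 : HasFDerivAt p (∫ z, gD1 d σ (y - s • z) ∂μ) y := by
      rw [hpe]; exact hasFDerivAt_p μ K hK hμK hσ' s y
    exact h1.log (ne_of_gt (hppos y))
  have hflog : (fderiv ℝ (fun y => Real.log (p y)))
      = fun y => (p y)⁻¹ • (∫ z, gD1 d σ (y - s • z) ∂μ) :=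
    funext fun y => (hlog y).fderiv
  have hinv : HasFDerivAt (fun y => (p y)⁻¹)
      ((-((p x) ^ 2)⁻¹) • (∫ z, gD1 d σ (x - s • z) ∂μ)) x := by
    have h1 : HasFDerivAt p (∫ z, gD1 d σ (x - s • z) ∂μ) x := by
      rw [hpe]; exact hasFDerivAt_p μ K hK hμK hσ' s x
    exact (hasDerivAt_inv hpne).comp_hasFDerivAt x h1
  have hL : HasFDerivAt (fun y => (p y)⁻¹ • (∫ z, gD1 d σ (y - s • z) ∂μ))
      ((p x)⁻¹ • (∫ z, gD2 d σ (x - s • z) ∂μ)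
        + ((-((p x) ^ 2)⁻¹) • (∫ z, gD1 d σ (x - s • z) ∂μ)).smulRight
            (∫ z, gD1 d σ (x - s • z) ∂μ)) x := by
    exact hinv.smul (hasFDerivAt_p1 μ K hK hμK hσ' s x)
  have hsecond : ∀ i j, iteratedFDeriv ℝ 2 (fun y => Real.log (p y)) x
        ![EuclideanSpace.single i 1, EuclideanSpace.single j 1]
      = (p x)⁻¹ * ((∫ z, gD2 d σ (x - s • z) ∂μ)
            (EuclideanSpace.single i 1) (EuclideanSpace.single j 1))
        + ((-((p x) ^ 2)⁻¹) * ((∫ z, gD1 d σ (x - s • z) ∂μ) (EuclideanSpace.single i 1)))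
          * ((∫ z, gD1 d σ (x - s • z) ∂μ) (EuclideanSpace.single j 1)) := by
    intro i j
    rw [iteratedFDeriv_two_apply, hflog, hL.fderiv]
    simp [ContinuousLinearMap.add_apply, ContinuousLinearMap.smul_apply,
      ContinuousLinearMap.smulRight_apply, smul_eq_mul]
  -- entrywise conclusion
  ext i j
  have hLHS : (∫ z, gaussDensity d σ (x - s • z) * ((z i - m x i) * (z j - m x j)) ∂μ)
      = (m x i * m x j) * J0 + (-(m x j)) * Ji i + (-(m x i)) * Ji j + 1 * Jij i j := by
    have he : (fun z => gaussDensity d σ (x - s • z) * ((z i - m x i) * (z j - m x j)))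
        = fun z => (m x i * m x j) * gaussDensity d σ (x - s • z)
            + (-(m x j)) * (gaussDensity d σ (x - s • z) * z i)
            + (-(m x i)) * (gaussDensity d σ (x - s • z) * z j)
            + 1 * (gaussDensity d σ (x - s • z) * (z i * z j)) := by
      funext z; ring
    rw [he, combo4 _ _ _ _ _ _ _ _ hInt0 (hInti i) (hInti j) (hIntij i j)]
  simp only [Matrix.of_apply, Matrix.smul_apply, Matrix.add_apply, Matrix.one_apply,
    smul_eq_mul]
  rw [hLHS, hsecond i j, hP2e i j, hP1e i, hP1e j, hmi i, hmi j, hA]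
  have hJ0pos : 0 < J0 := hA ▸ hppos x
  have hJ0ne : J0 ≠ 0 := ne_of_gt hJ0pos
  set δ : ℝ := if i = j then (1:ℝ) else 0 with hδ
  field_simp
  ring
end
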